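/- Let λ, μ > 0 be real and k ∈ ℕ. For ν ∈ ℝ define operators on polynomials φ ∈ ℂ[x]: E_ν φ = φ′, H_ν φ = 2xφ′ + νφ, F_ν φ = x²φ′ + νxφ (these satisfy [E_ν,F_ν] = H_ν, [H_ν,E_ν] = −2E_ν, [H_ν,F_ν] = 2F_ν). Define the Rankin–Cohen bracket RC_k : ℂ[x] × ℂ[x] → ℂ[x] by RC_k(f,g)(x) = Σ_{m=0}^{k} ((−k)_m / ((λ)_{k−m}·(μ)_m·m!)) · f^{(k−m)}(x) · g^{(m)}(x), where (a)_m is the rising factorial. Then for each T ∈ {E, H, F}: RC_k(T_λ f, g) + RC_k(f, T_μ g) = T_{λ+μ+2k}( RC_k(f,g) ) for all f, g ∈ ℂ[x]. -/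

import Mathlib

open Polynomial

noncomputable def opE (ν : ℂ) (φ : ℂ[X]) : ℂ[X] := derivative φ

noncomputable def opH (ν : ℂ) (φ : ℂ[X]) : ℂ[X] := 2 * X * derivative φ + C ν * φ

noncomputable def opF (ν : ℂ) (φ : ℂ[X]) : ℂ[X] := X ^ 2 * derivative φ + C ν * X * φ

noncomputable def RC (lam mu : ℂ) (k : ℕ) (f g : ℂ[X]) : ℂ[X] :=
  ∑ m ∈ Finset.range (k + 1),
    C ((ascPochhammer ℂ m).eval (-(k : ℂ)) /
        ((ascPochhammer ℂ (k - m)).eval lam * (ascPochhammer ℂ m).eval mu *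
          (m.factorial : ℂ))) *
      (derivative^[k - m] f) * (derivative^[m] g)

lemma ascPoch_complex (x : ℝ) (n : ℕ) :
    (ascPochhammer ℂ n).eval (x : ℂ) = (((ascPochhammer ℝ n).eval x : ℝ) : ℂ) := by
  rw [ascPochhammer_eval₂ (algebraMap ℝ ℂ),
    show ((x:ℂ)) = algebraMap ℝ ℂ x from rfl, Polynomial.eval₂_at_apply]
  rfl

lemma ascPoch_ne_zero {x : ℝ} (hx : 0 < x) (n : ℕ) :
    (ascPochhammer ℂ n).eval (x : ℂ) ≠ 0 := by
  rw [ascPoch_complex]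
  exact_mod_cast (ascPochhammer_pos n x hx).ne'

lemma iterH (ν : ℂ) (φ : ℂ[X]) (n : ℕ) :
    derivative^[n] (2 * X * derivative φ + C ν * φ) =
      2 * X * derivative^[n + 1] φ + C (2 * n + ν) * derivative^[n] φ := by
  induction n with
  | zero => simp
  | succ n ih =>
    rw [Function.iterate_succ_apply', ih,
      Function.iterate_succ_apply' derivative (n + 1) φ,
      Function.iterate_succ_apply' derivative n φ]
    have hC : (C (2 * ((n : ℂ) + 1) + ν) : ℂ[X]) = C (2 * (n:ℂ) + ν) + 2 := by
      rw [show 2 * ((n : ℂ) + 1) + ν = (2 * (n:ℂ) + ν) + 2 by ring, map_add, map_ofNat]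
    push_cast
    rw [hC]
    simp only [derivative_add, derivative_mul, derivative_C, derivative_X, derivative_ofNat]
    ring

lemma iterF (ν : ℂ) (φ : ℂ[X]) (n : ℕ) :
    derivative^[n] (X ^ 2 * derivative φ + C ν * X * φ) =
      X ^ 2 * derivative^[n + 1] φ + C (2 * n + ν) * X * derivative^[n] φ +
        C (n * ((n : ℂ) - 1 + ν)) * derivative^[n - 1] φ := by
  induction n with
  | zero => simp
  | succ n ih =>
    rw [Function.iterate_succ_apply', ih]
    match n with
    | 0 =>
      norm_num
      ring
    | m + 1 =>
      rw [Nat.add_sub_cancel, Nat.add_sub_cancel,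
        Function.iterate_succ_apply' derivative (m + 1 + 1) φ,
        Function.iterate_succ_apply' derivative (m + 1) φ,
        Function.iterate_succ_apply' derivative m φ]
      have h1 : (C (2 * ((m:ℂ) + 1 + 1) + ν) : ℂ[X]) = C (2 * ((m:ℂ)+1) + ν) + 2 := by
        rw [show 2 * ((m : ℂ) + 1 + 1) + ν = (2 * ((m:ℂ)+1) + ν) + 2 by ring, map_add, map_ofNat]
      have h2 : (C (((m:ℂ)+1+1) * ((m:ℂ) + 1 + 1 - 1 + ν)) : ℂ[X]) =
          C (((m:ℂ)+1) * ((m:ℂ) + 1 - 1 + ν)) + C (2 * ((m:ℂ)+1) + ν) := by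
        rw [← map_add]; ring_nf
      push_cast
      rw [h1, h2]
      simp only [derivative_add, derivative_mul, derivative_C, derivative_X, derivative_X_pow,
        derivative_ofNat, map_ofNat, zero_mul, add_zero, zero_add, mul_one, Nat.cast_ofNat,
        pow_one, mul_zero]
      ring

noncomputable def rcCoeff (lam mu : ℂ) (k m : ℕ) : ℂ :=
  (ascPochhammer ℂ m).eval (-(k : ℂ)) /
    ((ascPochhammer ℂ (k - m)).eval lam * (ascPochhammer ℂ m).eval mu * (m.factorial : ℂ))

lemma RC_eq (lam mu : ℂ) (k : ℕ) (f g : ℂ[X]) :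
    RC lam mu k f g = ∑ m ∈ Finset.range (k + 1),
      C (rcCoeff lam mu k m) * (derivative^[k - m] f) * (derivative^[m] g) := rfl

lemma coeff_rec (lam mu : ℝ) (hlam : 0 < lam) (hmu : 0 < mu) (k m : ℕ) (hm : m < k) :
    rcCoeff lam mu k m * ((k:ℂ) - m) * ((k:ℂ) - m - 1 + lam)
      + rcCoeff lam mu k (m+1) * ((m:ℂ) + 1) * ((m:ℂ) + mu) = 0 := by
  unfold rcCoeff
  have h2 : k - (m+1) = k - m - 1 := by omega
  have h1 : k - m = (k - m - 1) + 1 := by omega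
  have hcast : ((k - m - 1 : ℕ) : ℂ) = (k:ℂ) - m - 1 := by
    rw [Nat.cast_sub (by omega : 1 ≤ k - m), Nat.cast_sub hm.le, Nat.cast_one]
  rw [h2, h1, ascPochhammer_succ_eval, ascPochhammer_succ_eval, ascPochhammer_succ_eval,
    Nat.factorial_succ, hcast]
  have hL := ascPoch_ne_zero hlam (k - m - 1)
  have hM := ascPoch_ne_zero hmu m
  have hfac : ((m.factorial : ℂ)) ≠ 0 := by exact_mod_cast m.factorial_ne_zero
  have hlm : (lam:ℂ) + ((k:ℂ) - m - 1) ≠ 0 := by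
    rw [← hcast]
    have : (0:ℝ) < lam + ((k - m - 1 : ℕ) : ℝ) := by positivity
    exact_mod_cast this.ne'
  have hmm : (mu:ℂ) + (m:ℂ) ≠ 0 := by
    have : (0:ℝ) < mu + (m:ℝ) := by positivity
    exact_mod_cast this.ne'
  have hm1 : ((m:ℂ) + 1) ≠ 0 := by
    have : (0:ℝ) < (m:ℝ) + 1 := by positivity
    exact_mod_cast this.ne'
  simp only [Nat.add_sub_cancel]
  field_simp
  push_cast
  ring

theorem rankinCohen_equivariant (lam mu : ℝ) (hlam : 0 < lam) (hmu : 0 < mu) (k : ℕ)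
    (f g : ℂ[X]) :
    RC lam mu k (opE lam f) g + RC lam mu k f (opE mu g) =
        opE (lam + mu + 2 * k) (RC lam mu k f g) ∧
      RC lam mu k (opH lam f) g + RC lam mu k f (opH mu g) =
        opH (lam + mu + 2 * k) (RC lam mu k f g) ∧
      RC lam mu k (opF lam f) g + RC lam mu k f (opF mu g) =
        opF (lam + mu + 2 * k) (RC lam mu k f g) := by
  refine ⟨?_, ?_, ?_⟩
  · -- E part
    unfold opE
    rw [RC_eq, RC_eq, RC_eq, derivative_sum, ← Finset.sum_add_distrib]
    refine Finset.sum_congr rfl fun m hm => ?_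
    rw [← Function.iterate_succ_apply derivative (k - m) f,
      ← Function.iterate_succ_apply derivative m g,
      Function.iterate_succ_apply' derivative (k - m) f,
      Function.iterate_succ_apply' derivative m g]
    simp only [derivative_mul, derivative_C, zero_mul, zero_add]
  · -- H part
    unfold opH
    rw [RC_eq, RC_eq, RC_eq, derivative_sum, Finset.mul_sum, Finset.mul_sum,
      ← Finset.sum_add_distrib, ← Finset.sum_add_distrib]
    refine Finset.sum_congr rfl fun m hm => ?_
    have hmk : m ≤ k := by
      have := Finset.mem_range.mp hm; omega
    rw [iterH (lam:ℂ) f (k - m), iterH (mu:ℂ) g m, Nat.cast_sub hmk,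
      Function.iterate_succ_apply' derivative (k - m) f,
      Function.iterate_succ_apply' derivative m g]
    have hC : (C ((lam : ℂ) + (mu : ℂ) + 2 * (k : ℂ)) : ℂ[X]) =
        C (2 * ((k:ℂ) - (m:ℂ)) + (lam:ℂ)) + C (2 * (m:ℂ) + (mu:ℂ)) := by
      rw [← map_add]
      congr 1
      ring
    rw [hC]
    simp only [derivative_mul, derivative_C, zero_mul, zero_add]
    ring
  · -- F part
    unfold opF
    rw [RC_eq, RC_eq, RC_eq, derivative_sum, Finset.mul_sum, Finset.mul_sum,
      ← Finset.sum_add_distrib]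
    have key : ∑ m ∈ Finset.range (k + 1),
        (C (rcCoeff lam mu k m * ((k:ℂ) - m) * ((k:ℂ) - m - 1 + lam)) *
            (derivative^[k - m - 1] f) * (derivative^[m] g) +
          C (rcCoeff lam mu k m * (m:ℂ) * ((m:ℂ) - 1 + mu)) *
            (derivative^[k - m] f) * (derivative^[m - 1] g)) = 0 := by
      rw [Finset.sum_add_distrib, Finset.sum_range_succ, Finset.sum_range_succ']
      simp only [sub_self, Nat.cast_zero, mul_zero, zero_mul, map_zero, add_zero, zero_add]
      rw [← Finset.sum_add_distrib]
      refine Finset.sum_eq_zero fun m hm => ?_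
      have hmk : m < k := Finset.mem_range.mp hm
      rw [show k - (m + 1) = k - m - 1 from (Nat.sub_sub k m 1).symm,
        Nat.add_sub_cancel, Nat.cast_add, Nat.cast_one]
      have hab : rcCoeff lam mu k m * ((k:ℂ) - m) * ((k:ℂ) - m - 1 + lam)
          + rcCoeff lam mu k (m + 1) * ((m:ℂ) + 1) * ((m:ℂ) + 1 - 1 + mu) = 0 := by
        have h := coeff_rec lam mu hlam hmu k m hmk
        linear_combination h
      have h0 : (C (rcCoeff lam mu k m * ((k:ℂ) - m) * ((k:ℂ) - m - 1 + lam)) : ℂ[X])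
          + C (rcCoeff lam mu k (m + 1) * ((m:ℂ) + 1) * ((m:ℂ) + 1 - 1 + mu)) = 0 := by
        rw [← map_add, hab, map_zero]
      linear_combination ((derivative^[k - m - 1] f) * (derivative^[m] g)) * h0
    calc (∑ m ∈ Finset.range (k + 1),
          (C (rcCoeff lam mu k m) *
              (derivative^[k - m] (X ^ 2 * derivative f + C (lam:ℂ) * X * f)) *
              (derivative^[m] g) +
            C (rcCoeff lam mu k m) * (derivative^[k - m] f) *
              (derivative^[m] (X ^ 2 * derivative g + C (mu:ℂ) * X * g))))
        = (∑ m ∈ Finset.range (k + 1),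
            (X ^ 2 * derivative (C (rcCoeff lam mu k m) * (derivative^[k - m] f) *
                (derivative^[m] g)) +
              C ((lam : ℂ) + (mu : ℂ) + 2 * (k : ℂ)) * X *
                (C (rcCoeff lam mu k m) * (derivative^[k - m] f) * (derivative^[m] g))))
          + ∑ m ∈ Finset.range (k + 1),
            (C (rcCoeff lam mu k m * ((k:ℂ) - m) * ((k:ℂ) - m - 1 + lam)) *
                (derivative^[k - m - 1] f) * (derivative^[m] g) +
              C (rcCoeff lam mu k m * (m:ℂ) * ((m:ℂ) - 1 + mu)) *
                (derivative^[k - m] f) * (derivative^[m - 1] g)) := by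
          rw [← Finset.sum_add_distrib]
          refine Finset.sum_congr rfl fun m hm => ?_
          have hmk : m ≤ k := by
            have := Finset.mem_range.mp hm; omega
          rw [iterF (lam:ℂ) f (k - m), iterF (mu:ℂ) g m, Nat.cast_sub hmk,
            Function.iterate_succ_apply' derivative (k - m) f,
            Function.iterate_succ_apply' derivative m g]
          have hC : (C ((lam : ℂ) + (mu : ℂ) + 2 * (k : ℂ)) : ℂ[X]) =
              C (2 * ((k:ℂ) - (m:ℂ)) + (lam:ℂ)) + C (2 * (m:ℂ) + (mu:ℂ)) := by
            rw [← map_add]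
            congr 1
            ring
          rw [hC]
          simp only [derivative_mul, derivative_C, zero_mul, zero_add, map_mul]
          ring
      _ = _ := by
          rw [key, add_zero, Finset.sum_add_distrib]
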